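/- arXiv:2403.13001 — 7 statements merged into one kernel-verified Lean document; each statement's English description precedes it below -/
import Mathlib

section
/- Let C be a cartesian category with a fixed object X. The coKleisli category of the coreader comonad (− × X) admits an identity-on-objects oplax functor to Para(C) sending a morphism f : A × X → B to the X-parametric morphism (X, f), with opunitor the unique map X → 1 and oplaxator the diagonal Δ_X : X → X × X; the oplax functor coherence laws hold. -/
open CategoryTheory MonoidalCategory CartesianMonoidalCategory

universe v u

/-!
STATEMENT 4: Let `C` be a cartesian category with a fixed object `X`.  The coKleisli
category of the coreader comonad `(− × X)` admits an identity-on-objects oplax functor to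
`Para(C)` sending a morphism `f : A × X ⟶ B` to the `X`-parametric morphism `(X, f)`,
with opunitor the unique map `X ⟶ 1` and oplaxator the diagonal `Δ_X : X ⟶ X × X`; the
oplax functor coherence laws hold.

We model the cartesian structure by `ChosenFiniteProducts` (so `⊗` is the product and
`𝟙_ C` the terminal object).  The conclusions, stated concretely:
* the opunitor `toUnit X : X ⟶ 1` is a valid 2-cell `F(id_A) = (X, π_A) ⇒ (1, ρ_A)` from
  the image of the coKleisli identity to the `Para` identity: `(A ◁ toUnit X) ≫ ρ_A = π_A`;
* the oplaxator `Δ_X` is a valid 2-cell `F(f ; g) ⇒ F(f) ≫ F(g)`: reparameterising the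
  `Para`-composite `(X ⊗ X, μ ≫ (f ▷ X) ≫ g)` along `Δ_X` yields the coKleisli composite
  `⟨f, π_X⟩ ≫ g` (which copies `X`);
* the oplax functor coherence laws (associativity and the two unit laws), which for this
  functor amount to the coassociativity and counitality of the comonoid
  `(X, Δ_X, toUnit X)` with respect to the associator and unitors of `C`.
-/

variable {C : Type u} [Category.{v} C] [CartesianMonoidalCategory C]

/-- The diagonal (copy) map `Δ_X : X ⟶ X ⊗ X`. -/
def diag (X : C) : X ⟶ (X ⊗ X : C) := lift (𝟙 X) (𝟙 X)

/-- Composition in the coKleisli category `CoKl(− × X)` of the coreader comonad: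
copy `X` and feed it to both `f` and `g`; concretely `⟨f, π_X⟩ ≫ g`. -/
def coklComp {X A B D : C} (f : (A ⊗ X : C) ⟶ B) (g : (B ⊗ X : C) ⟶ D) :
    (A ⊗ X : C) ⟶ D :=
  lift f (snd A X) ≫ g

theorem statement4 (X : C) :
    -- opunitor 2-cell condition: the image `(X, π_A)` of the coKleisli identity is
    -- reparameterised by `toUnit X` to the `Para` identity `(𝟙_ C, ρ_A)`.
    (∀ A : C, (A ◁ toUnit X) ≫ (ρ_ A).hom = fst A X) ∧
    -- oplaxator 2-cell condition: the `Para` composite of `(X, f)` and `(X, g)`,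
    -- reparameterised along `Δ_X`, is the coKleisli composite of `f` and `g`.
    (∀ (A B D : C) (f : (A ⊗ X : C) ⟶ B) (g : (B ⊗ X : C) ⟶ D),
        (A ◁ diag X) ≫ (α_ A X X).inv ≫ (f ▷ X) ≫ g = coklComp f g) ∧
    -- oplax associativity law: coassociativity of `Δ_X`
    (diag X ≫ (diag X ▷ X) ≫ (α_ X X X).hom = diag X ≫ (X ◁ diag X)) ∧
    -- oplax left unit law
    (diag X ≫ (toUnit X ▷ X) ≫ (λ_ X).hom = 𝟙 X) ∧
    -- oplax right unit law
    (diag X ≫ (X ◁ toUnit X) ≫ (ρ_ X).hom = 𝟙 X) := by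
  refine ⟨fun A => ?_, fun A B D f g => ?_, ?_, ?_, ?_⟩
  · rw [← Iso.eq_comp_inv]
    apply hom_ext
    · simp
    · exact toUnit_unique _ _
  · have h0 : (A ◁ diag X) ≫ (α_ A X X).inv = lift (𝟙 (A ⊗ X)) (snd A X) := by
      apply hom_ext
      · apply hom_ext <;> simp [diag]
      · simp [diag]
    have h1 : lift (𝟙 (A ⊗ X)) (snd A X) ≫ (f ▷ X) = lift f (snd A X) := by
      apply hom_ext <;> simp
    rw [reassoc_of% h0, reassoc_of% h1, coklComp]
  · apply hom_ext
    · simp [diag]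
    · apply hom_ext <;> simp [diag]
  · rw [← Category.assoc, ← Iso.eq_comp_inv]
    apply hom_ext
    · exact toUnit_unique _ _
    · simp [diag]
  · rw [← Category.assoc, ← Iso.eq_comp_inv]
    apply hom_ext
    · simp [diag]
    · exact toUnit_unique _ _
end

section
/- Let (C, •) be a cartesian M-actegory, i.e. a monoidal M-actegory whose underlying monoidal structure on C is cartesian (with product × and terminal object 1). Then for all X in C, M in M, and B in C there is a natural isomorphism C(X, M • B) ≅ C(X, M • 1) × C(X, I • B). -/
open CategoryTheory MonoidalCategory

universe v u v' u'

/-!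
STATEMENT 7: Let `(C, •)` be a cartesian `M`-actegory, i.e. a monoidal `M`-actegory
whose underlying monoidal structure on `C` is cartesian (with product `×` and terminal
object `1`).  Then for all `X` in `C`, `P` in `M`, and `B` in `C` there is a natural
isomorphism `C(X, P • B) ≅ C(X, P • 1) × C(X, I • B)`.

We model the cartesian monoidal structure on `C` by `ChosenFiniteProducts` (so the
monoidal product `⊗` of `C` is the cartesian product and the monoidal unit `𝟙_ C` is the
terminal object), and a cartesian `M`-actegory as a right `M`-actegory equipped with the
mixed interchanger `(A ⊗ B) • (P ⊗ Q) ≅ (A • P) ⊗ (B • Q)` (natural in all variables)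
making the action a strong monoidal functor.  (We write the action as `actObj B P` for
`P • B`.)
-/

structure RightActegory (M : Type u) [Category.{v} M] [MonoidalCategory M]
    (C : Type u') [Category.{v'} C] where
  actObj : C → M → C
  actHom : ∀ {X Y : C} {P Q : M}, (X ⟶ Y) → (P ⟶ Q) → (actObj X P ⟶ actObj Y Q)
  act_id : ∀ (X : C) (P : M), actHom (𝟙 X) (𝟙 P) = 𝟙 (actObj X P)
  act_comp : ∀ {X Y Z : C} {P Q R : M} (f : X ⟶ Y) (g : Y ⟶ Z) (r : P ⟶ Q) (s : Q ⟶ R),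
      actHom (f ≫ g) (r ≫ s) = actHom f r ≫ actHom g s
  unitor : ∀ X : C, X ≅ actObj X (𝟙_ M)
  unitor_natural : ∀ {X Y : C} (f : X ⟶ Y),
      f ≫ (unitor Y).hom = (unitor X).hom ≫ actHom f (𝟙 (𝟙_ M))
  mult : ∀ (X : C) (P Q : M), actObj X (P ⊗ Q) ≅ actObj (actObj X P) Q
  mult_natural : ∀ {X Y : C} {P P' Q Q' : M} (f : X ⟶ Y) (r : P ⟶ P') (s : Q ⟶ Q'),
      actHom f (r ⊗ₘ s) ≫ (mult Y P' Q').hom = (mult X P Q).hom ≫ actHom (actHom f r) s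
  pentagon : ∀ (X : C) (P Q R : M),
      (mult X P (Q ⊗ R)).hom ≫ (mult (actObj X P) Q R).hom
        = actHom (𝟙 X) (α_ P Q R).inv ≫ (mult X (P ⊗ Q) R).hom
            ≫ actHom (mult X P Q).hom (𝟙 R)
  unit_right : ∀ (X : C) (P : M),
      (mult X P (𝟙_ M)).hom ≫ (unitor (actObj X P)).inv = actHom (𝟙 X) (ρ_ P).hom
  unit_left : ∀ (X : C) (P : M),
      (mult X (𝟙_ M) P).hom ≫ actHom (unitor X).inv (𝟙 P) = actHom (𝟙 X) (λ_ P).hom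

/-- A cartesian `M`-actegory: a monoidal `M`-actegory whose monoidal structure on the
base is cartesian. -/
structure CartesianActegory (M : Type u) [Category.{v} M] [MonoidalCategory M]
    (C : Type u') [Category.{v'} C] [CartesianMonoidalCategory C]
    extends RightActegory M C where
  interchanger : ∀ (A B : C) (P Q : M),
      actObj (A ⊗ B) (P ⊗ Q) ≅ actObj A P ⊗ actObj B Q
  interchanger_natural :
      ∀ {A A' B B' : C} {P P' Q Q' : M}
        (f : A ⟶ A') (g : B ⟶ B') (r : P ⟶ P') (s : Q ⟶ Q'),
        actHom (f ⊗ₘ g) (r ⊗ₘ s) ≫ (interchanger A' B' P' Q').hom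
          = (interchanger A B P Q).hom ≫ (actHom f r ⊗ₘ actHom g s)

variable {M : Type u} [Category.{v} M] [MonoidalCategory M]
variable {C : Type u'} [Category.{v'} C] [CartesianMonoidalCategory C]

/-- `C(X, P • B) ≅ C(X, P • 1) × C(X, I • B)`, naturally in `X`. -/
theorem statement7 (𝒜 : CartesianActegory M C) (B : C) (P : M) :
    ∃ e : ∀ X' : C, (X' ⟶ 𝒜.actObj B P)
            ≃ ((X' ⟶ 𝒜.actObj (𝟙_ C) P) × (X' ⟶ 𝒜.actObj B (𝟙_ M))),
      -- naturality in the first variable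
      ∀ {X' X'' : C} (h : X'' ⟶ X') (f : X' ⟶ 𝒜.actObj B P),
        e X'' (h ≫ f) = ((h ≫ (e X' f).1), (h ≫ (e X' f).2)) := by
  
  -- the iso `B • P ≅ (1 ⊗ B) • (P ⊗ 1)`
  let ι₁ : 𝒜.actObj B P ≅ 𝒜.actObj (𝟙_ C ⊗ B) (P ⊗ 𝟙_ M) :=
    { hom := 𝒜.actHom (λ_ B).inv (ρ_ P).inv
      inv := 𝒜.actHom (λ_ B).hom (ρ_ P).hom
      hom_inv_id := by
        rw [← 𝒜.act_comp]; simp [𝒜.act_id]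
      inv_hom_id := by
        rw [← 𝒜.act_comp]; simp [𝒜.act_id] }
  let ι : 𝒜.actObj B P ≅ 𝒜.actObj (𝟙_ C) P ⊗ 𝒜.actObj B (𝟙_ M) :=
    ι₁ ≪≫ 𝒜.interchanger (𝟙_ C) B P (𝟙_ M)
  refine ⟨fun X' =>
    { toFun := fun f => (f ≫ ι.hom ≫ CartesianMonoidalCategory.fst _ _,
        f ≫ ι.hom ≫ CartesianMonoidalCategory.snd _ _)
      invFun := fun p => CartesianMonoidalCategory.lift p.1 p.2 ≫ ι.inv
      left_inv := fun f => by
        have : CartesianMonoidalCategory.lift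
            (f ≫ ι.hom ≫ CartesianMonoidalCategory.fst _ _)
            (f ≫ ι.hom ≫ CartesianMonoidalCategory.snd _ _) = f ≫ ι.hom := by
          apply CartesianMonoidalCategory.hom_ext <;> simp
        dsimp only; rw [this]; simp
      right_inv := fun p => by
        simp }, ?_⟩
  intro X' X'' h f
  simp
end

section
/- Let (C, •) be a cartesian M-actegory. Then for all objects X, Y of C there is a natural bijection Copara_•(C)(X, Y) ≅ C(X, Y) × Copara_•(C)(X, 1), i.e. Σ_{M:M} C(X, M • Y) ≅ C(X, Y) × Σ_{M:M} C(X, M • 1). -/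
open CategoryTheory MonoidalCategory

universe v u v' u'

variable {M : Type u} [Category.{v} M] [MonoidalCategory M]
variable {C : Type u'} [Category.{v'} C] [CartesianMonoidalCategory C]

/-- The action of a right actegory on isomorphisms. -/
def RightActegory.actIso (𝒜 : RightActegory M C) {X Y : C} {P Q : M}
    (i : X ≅ Y) (j : P ≅ Q) : 𝒜.actObj X P ≅ 𝒜.actObj Y Q where
  hom := 𝒜.actHom i.hom j.hom
  inv := 𝒜.actHom i.inv j.inv
  hom_inv_id := by rw [← 𝒜.act_comp, i.hom_inv_id, j.hom_inv_id, 𝒜.act_id]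
  inv_hom_id := by rw [← 𝒜.act_comp, i.inv_hom_id, j.inv_hom_id, 𝒜.act_id]

/-- The key isomorphism `Y • P ≅ Y × (1 • P)` in a cartesian actegory. -/
def CartesianActegory.factorIso (𝒜 : CartesianActegory M C) (Y : C) (P : M) :
    𝒜.actObj Y P ≅ Y ⊗ 𝒜.actObj (𝟙_ C) P :=
  𝒜.toRightActegory.actIso (ρ_ Y).symm (λ_ P).symm
    ≪≫ 𝒜.interchanger Y (𝟙_ C) (𝟙_ M) P
    ≪≫ tensorIso (𝒜.unitor Y).symm (Iso.refl _)

/-- Hom into a binary product splits as a product of homsets. -/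
def homProdEquiv (X A B : C) : (X ⟶ A ⊗ B) ≃ (X ⟶ A) × (X ⟶ B) where
  toFun f := (f ≫ CartesianMonoidalCategory.fst A B, f ≫ CartesianMonoidalCategory.snd A B)
  invFun p := CartesianMonoidalCategory.lift p.1 p.2
  left_inv f := by apply CartesianMonoidalCategory.hom_ext <;> simp
  right_inv p := by simp

/-- the factorisation
`Copara_•(C)(X, Y) ≅ C(X, Y) × Copara_•(C)(X, 1)` for a cartesian `M`-actegory, where a
coparametric morphism `X → Y` is a pair `(P : M, f : X ⟶ P • Y)` (written `actObj Y P`),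
and `1 = 𝟙_ C` is the terminal object of `C`. -/
theorem statement8 (𝒜 : CartesianActegory M C) (X Y : C) :
    Nonempty
      (((P : M) × (X ⟶ 𝒜.actObj Y P))
        ≃ ((X ⟶ Y) × ((P : M) × (X ⟶ 𝒜.actObj (𝟙_ C) P)))) := by
  refine ⟨?_⟩
  refine (Equiv.sigmaCongrRight fun P =>
    ((Iso.refl X).homCongr (𝒜.factorIso Y P)).trans
      (homProdEquiv X Y (𝒜.actObj (𝟙_ C) P))).trans ?_
  exact
    { toFun := fun x => (x.2.1, ⟨x.1, x.2.2⟩)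
      invFun := fun x => ⟨x.2.1, x.1, x.2.2⟩
      left_inv := fun _ => rfl
      right_inv := fun _ => rfl }
end

section
/- Let C be a cartesian monoidal category. Then for any objects A, A', B, B' there is a bijection Optic(C)((A,A'),(B,B')) ≅ C(A, B) × Optic(C)((A,A'),(1,B')), where Optic(C) denotes optics for the cartesian self-action. Consequently the hom-set of optics reduces to the lens representation C(A, B) × C(A × B', A'). -/
open CategoryTheory MonoidalCategory

universe v u

/-!
STATEMENT 9: Let `C` be a cartesian monoidal category.  Then for any objects
`A, A', B, B'` there is a bijection
`Optic(C)((A,A'),(B,B')) ≅ C(A, B) × Optic(C)((A,A'),(1,B'))`,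
where `Optic(C)` denotes optics for the cartesian self-action.  Consequently the hom-set
of optics reduces to the lens representation `C(A, B) × C(A × B', A')`.

Here the hom-set of (non-mixed) optics is the coend
`∫^{M : C} C(A, M ⊗ B) × C(M ⊗ B', A')`, realised concretely as the quotient of triples
`(M, f : A ⟶ M ⊗ B, f' : M ⊗ B' ⟶ A')` by the relation sliding residual morphisms
`r : M ⟶ N`: `(M, f, (r ▷ B') ≫ g') ∼ (N, f ≫ (r ▷ B), g')`.  We model the cartesian
monoidal structure by `ChosenFiniteProducts`, so `⊗` is the cartesian product and
`𝟙_ C` is the terminal object `1`.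
-/

variable {C : Type u} [Category.{v} C] [CartesianMonoidalCategory C]

/-- Raw data of an optic `(A, A') → (B, B')`: a residual `M` together with a forward map
`A ⟶ M ⊗ B` and a backward map `M ⊗ B' ⟶ A'`. -/
def OpticData (A A' B B' : C) : Type (max u v) :=
  (M : C) × ((A ⟶ (M ⊗ B : C)) × ((M ⊗ B' : C) ⟶ A'))

/-- The coend relation on optic data: `x ∼ y` when there is a residual morphism
`r : M ⟶ N` with `x.f ≫ (r ▷ B) = y.f` and `(r ▷ B') ≫ y.f' = x.f'`. -/
def OpticRel (A A' B B' : C) : OpticData A A' B B' → OpticData A A' B B' → Prop :=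
  fun x y => ∃ r : x.1 ⟶ y.1,
    x.2.1 ≫ (r ▷ B) = y.2.1 ∧ (r ▷ B') ≫ y.2.2 = x.2.2

/-- The hom-set of optics: the coend `∫^{M} C(A, M ⊗ B) × C(M ⊗ B', A')`. -/
def OpticHom (A A' B B' : C) : Type (max u v) :=
  Quot (OpticRel A A' B B')


open CartesianMonoidalCategory

private def fwdData (A A' B B' : C) (x : OpticData A A' B B') :
    (A ⟶ B) × (A ⊗ B' ⟶ A') :=
  ⟨x.2.1 ≫ snd _ _, lift (fst _ _ ≫ x.2.1 ≫ fst _ _) (snd _ _) ≫ x.2.2⟩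

private lemma fwdData_resp (A A' B B' : C) (x y : OpticData A A' B B')
    (h : OpticRel A A' B B' x y) : fwdData A A' B B' x = fwdData A A' B B' y := by
  obtain ⟨r, h1, h2⟩ := h
  obtain ⟨M, f, f'⟩ := x
  obtain ⟨N, g, g'⟩ := y
  dsimp at h1 h2 ⊢
  rw [← h1, ← h2]
  unfold fwdData
  simp only [Category.assoc, whiskerRight_snd, whiskerRight_fst]
  congr 1
  rw [← Category.assoc, ← Category.assoc]
  congr 1
  ext <;> simp

private def lensEquiv (A A' B B' : C) :
    OpticHom A A' B B' ≃ ((A ⟶ B) × (A ⊗ B' ⟶ A')) where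
  toFun := Quot.lift (fwdData A A' B B') (fwdData_resp A A' B B')
  invFun := fun p => Quot.mk _ ⟨A, lift (𝟙 A) p.1, p.2⟩
  left_inv := by
    rintro ⟨⟨M, f, f'⟩⟩
    dsimp [fwdData]
    apply Quot.sound
    refine ⟨f ≫ fst _ _, ?_, ?_⟩
    · ext <;> simp
    · dsimp
      rw [← Category.assoc]
      congr 1
      ext <;> simp
  right_inv := by
    rintro ⟨b, l⟩
    dsimp [fwdData]
    congr 1
    · simp
    · rw [← Category.id_comp l]
      rw [← Category.assoc]
      congr 1
      ext <;> simp

theorem statement9 (A A' B B' : C) :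
    Nonempty (OpticHom A A' B B' ≃ ((A ⟶ B) × OpticHom A A' (𝟙_ C) B')) ∧
    Nonempty (OpticHom A A' B B' ≃ ((A ⟶ B) × (A ⊗ B' ⟶ A'))) := by
  have hu : Unique (A ⟶ 𝟙_ C) := ⟨⟨toUnit A⟩, fun f => toUnit_unique f _⟩
  refine ⟨⟨?_⟩, ⟨lensEquiv A A' B B'⟩⟩
  refine (lensEquiv A A' B B').trans (Equiv.prodCongr (Equiv.refl _) ?_)
  exact ((lensEquiv A A' (𝟙_ C) B').trans (@Equiv.uniqueProd _ _ hu)).symm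
end

section
/- Let (C, ⋗) be an M-actegory (forward), (D, ⋖) a closed M'-actegory (backward), and let the weight W : M^op × M' → Set be corepresented by a lax monoidal functor j : M' → M, i.e. W(M, M') ≅ M(M, j(M')). Then for all A, A', B, B' there is a natural bijection Optic^W((A,A'),(B,B')) ≅ C(A, j([B', A']_D) ⋗ B), where [B', A']_D denotes the internal hom object in M' coming from the closed structure D(M' ⋖ B', A') ≅ M'(M', [B', A']_D). -/
open CategoryTheory MonoidalCategory

universe v u v' u' v₂ u₂ v₂' u₂'

/-- A closed right actegory: a right actegory `(D, ⋖)` such that each functor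
`− ⋖ X : M' → D` has a right adjoint `[X, −]`, witnessed by a natural bijection
`D(P ⋖ X, Y) ≃ M'(P, [X, Y])`. -/
structure ClosedRightActegory (M' : Type u₂) [Category.{v₂} M'] [MonoidalCategory M']
    (D : Type u₂') [Category.{v₂'} D] extends RightActegory M' D where
  ihom : D → D → M'
  adj : ∀ (P : M') (X Y : D), (actObj X P ⟶ Y) ≃ (P ⟶ ihom X Y)
  adj_natural : ∀ {P P' : M'} (r : P' ⟶ P) {X Y : D} (f : actObj X P ⟶ Y),
      adj P' X Y (actHom (𝟙 X) r ≫ f) = r ≫ adj P X Y f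

variable {M : Type u} [Category.{v} M] [MonoidalCategory M]
variable {C : Type u'} [Category.{v'} C]
variable {M' : Type u₂} [Category.{v₂} M'] [MonoidalCategory M']
variable {D : Type u₂'} [Category.{v₂'} D]

/-- Raw data of a weighted optic `(A, A') → (B, B')` for the weight
`W(M, M') = M(M, j M')`: residuals `(P, P')`, a forward map `f : A ⟶ P ⋗ B`, the
connecting map `s : W(P, P') = M(P, j P')`, and a backward map `f' : P' ⋖ B' ⟶ A'`. -/
def WOpticData (𝒜 : RightActegory M C) (ℬ : ClosedRightActegory M' D)
    (j : M' ⥤ M) (A B : C) (A' B' : D) : Type (max u u₂ v v' v₂') :=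
  (P : M) × (P' : M') × ((A ⟶ 𝒜.actObj B P) × (P ⟶ j.obj P') × (ℬ.actObj B' P' ⟶ A'))

/-- The coend relation on weighted optic data: `x ∼ y` when there are `r : P ⟶ Q` and
`r' : Q' ⟶ P'` compatible with the forward maps, the weights and the backward maps. -/
def WOpticRel (𝒜 : RightActegory M C) (ℬ : ClosedRightActegory M' D)
    (j : M' ⥤ M) (A B : C) (A' B' : D) :
    WOpticData 𝒜 ℬ j A B A' B' → WOpticData 𝒜 ℬ j A B A' B' → Prop :=
  fun x y => ∃ (r : x.1 ⟶ y.1) (r' : y.2.1 ⟶ x.2.1),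
    x.2.2.1 ≫ 𝒜.actHom (𝟙 B) r = y.2.2.1 ∧
    r ≫ y.2.2.2.1 ≫ j.map r' = x.2.2.2.1 ∧
    ℬ.actHom (𝟙 B') r' ≫ x.2.2.2.2 = y.2.2.2.2

/-- The hom-set of weighted optics: the coend
`∫^{P, P'} C(A, P ⋗ B) × M(P, j P') × D(P' ⋖ B', A')`. -/
def WOpticHom (𝒜 : RightActegory M C) (ℬ : ClosedRightActegory M' D)
    (j : M' ⥤ M) (A B : C) (A' B' : D) : Type (max u u₂ v v' v₂') :=
  Quot (WOpticRel 𝒜 ℬ j A B A' B')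

lemma actHom_id_comp (𝒜 : RightActegory M C) (B : C) {P Q R : M} (a : P ⟶ Q) (b : Q ⟶ R) :
    𝒜.actHom (𝟙 B) (a ≫ b) = 𝒜.actHom (𝟙 B) a ≫ 𝒜.actHom (𝟙 B) b := by
  rw [← 𝒜.act_comp, Category.comp_id]

theorem statement11 (𝒜 : RightActegory M C) (ℬ : ClosedRightActegory M' D)
    (j : M' ⥤ M) [j.LaxMonoidal] (A B : C) (A' B' : D) :
    Nonempty
      (WOpticHom 𝒜 ℬ j A B A' B' ≃ (A ⟶ 𝒜.actObj B (j.obj (ℬ.ihom B' A')))) := by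
  refine ⟨{
    toFun := Quot.lift
      (fun x => x.2.2.1 ≫ 𝒜.actHom (𝟙 B) (x.2.2.2.1 ≫ j.map (ℬ.adj x.2.1 B' A' x.2.2.2.2)))
      ?_
    invFun := fun g => Quot.mk _ ⟨j.obj (ℬ.ihom B' A'), ℬ.ihom B' A',
      g, 𝟙 _, (ℬ.adj _ B' A').symm (𝟙 _)⟩
    left_inv := ?_
    right_inv := ?_ }⟩
  · rintro ⟨P, P', f, s, f'⟩ ⟨Q, Q', g, t, g'⟩ ⟨r, r', h1, h2, h3⟩
    dsimp only at *
    have hadj : ℬ.adj Q' B' A' g' = r' ≫ ℬ.adj P' B' A' f' := by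
      rw [← h3, ℬ.adj_natural]
    rw [hadj, ← h2, ← h1]
    simp only [j.map_comp, actHom_id_comp, Category.assoc]
  · intro x
    refine Quot.inductionOn x ?_
    rintro ⟨P, P', f, s, f'⟩
    dsimp only
    have stepB : Quot.mk (WOpticRel 𝒜 ℬ j A B A' B')
        ⟨P, ℬ.ihom B' A', f, s ≫ j.map (ℬ.adj P' B' A' f'), (ℬ.adj _ B' A').symm (𝟙 _)⟩
        = Quot.mk _ ⟨j.obj (ℬ.ihom B' A'), ℬ.ihom B' A',
            f ≫ 𝒜.actHom (𝟙 B) (s ≫ j.map (ℬ.adj P' B' A' f')), 𝟙 _,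
            (ℬ.adj _ B' A').symm (𝟙 _)⟩ := by
      apply Quot.sound
      refine ⟨s ≫ j.map (ℬ.adj P' B' A' f'), 𝟙 _, rfl, ?_, ?_⟩
      · simp
      · rw [ℬ.act_id]; simp
    have stepA : Quot.mk (WOpticRel 𝒜 ℬ j A B A' B')
        ⟨P, ℬ.ihom B' A', f, s ≫ j.map (ℬ.adj P' B' A' f'), (ℬ.adj _ B' A').symm (𝟙 _)⟩
        = Quot.mk _ ⟨P, P', f, s, f'⟩ := by
      apply Quot.sound
      refine ⟨𝟙 _, ℬ.adj P' B' A' f', ?_, ?_, ?_⟩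
      · rw [𝒜.act_id]; simp
      · simp
      · apply (ℬ.adj _ B' A').injective
        rw [ℬ.adj_natural]
        simp
    rw [← stepB, stepA]
  · intro g
    dsimp only
    simp [actHom_id_comp, 𝒜.act_id]
end

section
/- Let C be a monoidal category and let F : C → Set be a lax monoidal functor with structure (φ, ε). Then the category of elements El(F) carries a monoidal structure with (C, c') ⊗ (D, d') = (C ⊗ D, φ_{C,D}(c', d')) and unit (I, ε(•)), with associators and unitors inherited from C; moreover the projection π_F : El(F) → C is a strict monoidal functor. If C is braided and F is a braided lax monoidal functor, then El(F) is braided and π_F is strict braided monoidal. -/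
open CategoryTheory MonoidalCategory

universe v u w

namespace Statement13Aux

variable {C : Type u} [Category.{v} C] [MonoidalCategory C]
    (F : C ⥤ Type w)
    (φ : ∀ X Y : C, F.obj X → F.obj Y → F.obj (X ⊗ Y))
    (ε : F.obj (𝟙_ C))
    (φ_natural : ∀ {X X' Y Y' : C} (f : X ⟶ X') (g : Y ⟶ Y') (x : F.obj X) (y : F.obj Y),
        F.map (f ⊗ₘ g) (φ X Y x y) = φ X' Y' (F.map f x) (F.map g y))
    (φ_assoc : ∀ {X Y Z : C} (x : F.obj X) (y : F.obj Y) (z : F.obj Z),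
        F.map (α_ X Y Z).hom (φ (X ⊗ Y) Z (φ X Y x y) z) = φ X (Y ⊗ Z) x (φ Y Z y z))
    (φ_unit_left : ∀ {X : C} (x : F.obj X), F.map (λ_ X).hom (φ (𝟙_ C) X ε x) = x)
    (φ_unit_right : ∀ {X : C} (x : F.obj X), F.map (ρ_ X).hom (φ X (𝟙_ C) x ε) = x)

@[simps]
def elStruct : MonoidalCategoryStruct F.Elements where
  tensorObj p q := ⟨p.1 ⊗ q.1, φ p.1 q.1 p.2 q.2⟩
  whiskerLeft p q₁ q₂ g := ⟨p.1 ◁ g.1, by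
    rw [← MonoidalCategory.id_tensorHom, φ_natural, FunctorToTypes.map_id_apply, g.2]⟩
  whiskerRight f q := ⟨f.1 ▷ q.1, by
    rw [← MonoidalCategory.tensorHom_id, φ_natural, FunctorToTypes.map_id_apply, f.2]⟩
  tensorHom f g := ⟨f.1 ⊗ₘ g.1, by rw [φ_natural, f.2, g.2]⟩
  tensorUnit := ⟨𝟙_ C, ε⟩
  associator p q r := CategoryOfElements.isoMk _ _ (α_ p.1 q.1 r.1) (φ_assoc p.2 q.2 r.2)
  leftUnitor p := CategoryOfElements.isoMk _ _ (λ_ p.1) (φ_unit_left p.2)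
  rightUnitor p := CategoryOfElements.isoMk _ _ (ρ_ p.1) (φ_unit_right p.2)

def elMon : @MonoidalCategory F.Elements _ :=
  letI := elStruct F φ ε @φ_natural @φ_assoc @φ_unit_left @φ_unit_right
  MonoidalCategory.ofTensorHom
    (id_tensorHom_id := by intros; apply Subtype.ext; exact id_tensorHom_id _ _)
    (id_tensorHom := by intros; apply Subtype.ext; exact id_tensorHom _ _)
    (tensorHom_id := by intros; apply Subtype.ext; exact tensorHom_id _ _)
    (tensorHom_comp_tensorHom := by intros; apply Subtype.ext; exact tensorHom_comp_tensorHom _ _ _ _)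
    (associator_naturality := by intros; apply Subtype.ext; exact associator_naturality _ _ _)
    (leftUnitor_naturality := by
      intro X Y f; apply Subtype.ext
      show (𝟙 (𝟙_ C) ⊗ₘ f.1) ≫ (λ_ Y.1).hom = (λ_ X.1).hom ≫ f.1
      simp)
    (rightUnitor_naturality := by
      intro X Y f; apply Subtype.ext
      show (f.1 ⊗ₘ 𝟙 (𝟙_ C)) ≫ (ρ_ Y.1).hom = (ρ_ X.1).hom ≫ f.1
      simp)
    (pentagon := by
      intro W X Y Z; apply Subtype.ext
      show ((α_ W.1 X.1 Y.1).hom ⊗ₘ 𝟙 Z.1) ≫ (α_ W.1 (X.1 ⊗ Y.1) Z.1).hom ≫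
        (𝟙 W.1 ⊗ₘ (α_ X.1 Y.1 Z.1).hom) = (α_ (W.1 ⊗ X.1) Y.1 Z.1).hom ≫ (α_ W.1 X.1 (Y.1 ⊗ Z.1)).hom
      simp [MonoidalCategory.pentagon])
    (triangle := by
      intro X Y; apply Subtype.ext
      show (α_ X.1 (𝟙_ C) Y.1).hom ≫ (𝟙 X.1 ⊗ₘ (λ_ Y.1).hom) = ((ρ_ X.1).hom ⊗ₘ 𝟙 Y.1)
      simp [MonoidalCategory.triangle])

def elBraided (bc : BraidedCategory C)
    (hb : ∀ {X Y : C} (x : F.obj X) (y : F.obj Y),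
        F.map (bc.braiding X Y).hom (φ X Y x y) = φ Y X y x) :
    @BraidedCategory F.Elements _
      (elMon F φ ε @φ_natural @φ_assoc @φ_unit_left @φ_unit_right) :=
  letI := bc
  letI := elMon F φ ε @φ_natural @φ_assoc @φ_unit_left @φ_unit_right
  { braiding := fun p q => CategoryOfElements.isoMk _ _ (β_ p.1 q.1) (hb p.2 q.2)
    braiding_naturality_right := by
      intro X Y Z f; apply Subtype.ext
      show X.1 ◁ f.1 ≫ (β_ X.1 Z.1).hom = (β_ X.1 Y.1).hom ≫ f.1 ▷ X.1
      simp
    braiding_naturality_left := by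
      intro X Y f Z; apply Subtype.ext
      show f.1 ▷ Z.1 ≫ (β_ Y.1 Z.1).hom = (β_ X.1 Z.1).hom ≫ Z.1 ◁ f.1
      simp
    hexagon_forward := by
      intro X Y Z; apply Subtype.ext
      show (α_ X.1 Y.1 Z.1).hom ≫ (β_ X.1 (Y.1 ⊗ Z.1)).hom ≫ (α_ Y.1 Z.1 X.1).hom =
        ((β_ X.1 Y.1).hom ▷ Z.1) ≫ (α_ Y.1 X.1 Z.1).hom ≫ (Y.1 ◁ (β_ X.1 Z.1).hom)
      exact BraidedCategory.hexagon_forward X.1 Y.1 Z.1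
    hexagon_reverse := by
      intro X Y Z; apply Subtype.ext
      show (α_ X.1 Y.1 Z.1).inv ≫ (β_ (X.1 ⊗ Y.1) Z.1).hom ≫ (α_ Z.1 X.1 Y.1).inv =
        (X.1 ◁ (β_ Y.1 Z.1).hom) ≫ (α_ X.1 Z.1 Y.1).inv ≫ ((β_ X.1 Z.1).hom ▷ Y.1)
      exact BraidedCategory.hexagon_reverse X.1 Y.1 Z.1 }

end Statement13Aux

theorem statement13 {C : Type u} [Category.{v} C] [MonoidalCategory C]
    (F : C ⥤ Type w)
    -- lax monoidal structure on `F`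
    (φ : ∀ X Y : C, F.obj X → F.obj Y → F.obj (X ⊗ Y))
    (ε : F.obj (𝟙_ C))
    (φ_natural : ∀ {X X' Y Y' : C} (f : X ⟶ X') (g : Y ⟶ Y') (x : F.obj X) (y : F.obj Y),
        F.map (f ⊗ₘ g) (φ X Y x y) = φ X' Y' (F.map f x) (F.map g y))
    (φ_assoc : ∀ {X Y Z : C} (x : F.obj X) (y : F.obj Y) (z : F.obj Z),
        F.map (α_ X Y Z).hom (φ (X ⊗ Y) Z (φ X Y x y) z) = φ X (Y ⊗ Z) x (φ Y Z y z))
    (φ_unit_left : ∀ {X : C} (x : F.obj X), F.map (λ_ X).hom (φ (𝟙_ C) X ε x) = x)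
    (φ_unit_right : ∀ {X : C} (x : F.obj X), F.map (ρ_ X).hom (φ X (𝟙_ C) x ε) = x) :
    ∃ m : MonoidalCategory F.Elements,
      -- the tensor product of objects is the prescribed one
      ∃ htensor : ∀ p q : F.Elements,
          m.tensorObj p q = (⟨p.1 ⊗ q.1, φ p.1 q.1 p.2 q.2⟩ : F.Elements),
      -- the unit is the prescribed one
      ∃ _hunit : m.tensorUnit = (⟨𝟙_ C, ε⟩ : F.Elements),
      -- the associator and unitors are inherited from `C` (π_F is strict monoidal)
      (∀ p q r : F.Elements,
          (m.associator p q r).hom.1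
            = eqToHom (by rw [htensor, htensor]) ≫ (α_ p.1 q.1 r.1).hom
                ≫ eqToHom (by rw [htensor, htensor])) ∧
      (∀ p : F.Elements,
          (m.leftUnitor p).hom.1
            = eqToHom (by rw [htensor, _hunit]) ≫ (λ_ p.1).hom) ∧
      (∀ p : F.Elements,
          (m.rightUnitor p).hom.1
            = eqToHom (by rw [htensor, _hunit]) ≫ (ρ_ p.1).hom) ∧
      -- if `C` is braided and `F` is a braided lax monoidal functor, then `El(F)` is
      -- braided and the projection is strict braided monoidal
      (∀ bc : BraidedCategory C,
          (∀ {X Y : C} (x : F.obj X) (y : F.obj Y),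
              F.map (bc.braiding X Y).hom (φ X Y x y) = φ Y X y x) →
          ∃ b : @BraidedCategory F.Elements _ m,
            ∀ p q : F.Elements,
              (b.braiding p q).hom.1
                = eqToHom (by rw [htensor]) ≫ (bc.braiding p.1 q.1).hom
                    ≫ eqToHom (by rw [htensor])) := by
  refine ⟨Statement13Aux.elMon F φ ε @φ_natural @φ_assoc @φ_unit_left @φ_unit_right,
    fun p q => rfl, rfl, ?_, ?_, ?_, ?_⟩
  · intro p q r
    show (α_ p.1 q.1 r.1).hom = 𝟙 _ ≫ (α_ p.1 q.1 r.1).hom ≫ 𝟙 _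
    simp
  · intro p
    show (λ_ p.1).hom = 𝟙 _ ≫ (λ_ p.1).hom
    simp
  · intro p
    show (ρ_ p.1).hom = 𝟙 _ ≫ (ρ_ p.1).hom
    simp
  · intro bc hb
    refine ⟨Statement13Aux.elBraided F φ ε @φ_natural @φ_assoc @φ_unit_left @φ_unit_right bc @hb,
      fun p q => ?_⟩
    show (bc.braiding p.1 q.1).hom = 𝟙 _ ≫ (bc.braiding p.1 q.1).hom ≫ 𝟙 _
    simp
end

section
/- In the category Smooth of Euclidean spaces and smooth maps, the assignment f ↦ (f, R[f]) where R[f](x, v) = J[f](x)^T v (the transposed Jacobian applied to v) defines a functor Smooth → Lens_A(Smooth): it sends identities to identity lenses and composition to lens composition, i.e. the reverse-mode chain rule R[f;g](x, w) = R[f](x, R[g](f(x), w)) holds, and each R[f](x, −) is linear (hence additive) in its second argument. -/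
/-!
STATEMENT 17: In the category `Smooth` of Euclidean spaces and smooth maps, the assignment
`f ↦ (f, R[f])` where `R[f](x, v) = J[f](x)ᵀ v` (the transposed Jacobian, i.e. the adjoint
of the Fréchet derivative, applied to `v`) defines a functor `Smooth → Lens_A(Smooth)`:
* it sends identities to identity lenses (`R[id](x, w) = w`, the projection `π₂`),
* it sends composition to lens composition, i.e. the reverse-mode chain rule
  `R[f ; g](x, w) = R[f](x, R[g](f x, w))` holds, and
* each `R[f](x, −)` is linear (hence additive) in its second argument.
-/

open ContinuousLinearMap

/-- Euclidean space `ℝ^n`, an object of `Smooth`. -/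
abbrev E (n : ℕ) : Type := EuclideanSpace ℝ (Fin n)

/-- The reverse derivative `R[f] : ℝ^n × ℝ^m → ℝ^n`, `R[f](x, w) = J[f](x)ᵀ w`:
the adjoint (transpose) of the Jacobian of `f` at `x`, applied to `w`. -/
noncomputable def Rev {n m : ℕ} (f : E n → E m) (x : E n) (w : E m) : E n :=
  ContinuousLinearMap.adjoint (fderiv ℝ f x) w

theorem statement17 :
    -- identities go to identity lenses: the backward pass of `id` is the projection `π₂`
    (∀ (n : ℕ) (x w : E n), Rev (fun y => y) x w = w) ∧
    -- composition goes to lens composition: the reverse-mode chain rule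
    (∀ (n m k : ℕ) (f : E n → E m) (g : E m → E k),
        ContDiff ℝ (⊤ : ℕ∞) f → ContDiff ℝ (⊤ : ℕ∞) g →
        ∀ (x : E n) (w : E k),
          Rev (fun y => g (f y)) x w = Rev f x (Rev g (f x) w)) ∧
    -- additivity (indeed linearity) of `R[f](x, −)` in its second argument
    (∀ (n m : ℕ) (f : E n → E m), ContDiff ℝ (⊤ : ℕ∞) f →
        ∀ (x : E n) (v w : E m),
          Rev f x (v + w) = Rev f x v + Rev f x w ∧ Rev f x (0 : E m) = 0) := by
  refine ⟨?_, ?_, ?_⟩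
  · intro n x w
    simp [Rev, fderiv_id', ContinuousLinearMap.adjoint_id]
  · intro n m k f g hf hg x w
    have hfd : DifferentiableAt ℝ f x := (hf.differentiable (by simp)) x
    have hgd : DifferentiableAt ℝ g (f x) := (hg.differentiable (by simp)) (f x)
    have h : fderiv ℝ (fun y => g (f y)) x = (fderiv ℝ g (f x)).comp (fderiv ℝ f x) :=
      fderiv_comp x hgd hfd
    simp [Rev, h, ContinuousLinearMap.adjoint_comp]
  · intro n m f hf x v w
    exact ⟨map_add _ _ _, map_zero _⟩
end
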